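/- arXiv:2405.03510 — 5 statements merged into one kernel-verified Lean document; each statement's English description precedes it below -/
import Mathlib

section
/- For any real constants e and L with (e, L) ≠ (0, 0), the proper time τ(e, L) = ∫₀^{2M} [e² + (1 + L²/r²)(2M/r - 1)]^{-1/2} dr is strictly less than τ(0, 0) = Mπ. -/
open Real MeasureTheory Set intervalIntegral

-- canonical form
lemma schw_f0_eq {M : ℝ} (hM : 0 < M) {r : ℝ} (hr : r ∈ Icc (0:ℝ) (2*M)) :
    (Real.sqrt (2*M/r - 1))⁻¹ = Real.sqrt (r / (2*M - r)) := by
  rcases eq_or_lt_of_le hr.1 with h0 | h0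
  · simp [← h0, Real.sqrt_eq_zero_of_nonpos]
  rcases eq_or_lt_of_le hr.2 with h2 | h2
  · rw [h2]
    norm_num [div_self (by positivity : (2*M) ≠ 0)]
  · have hne : r ≠ 0 := ne_of_gt h0
    have : 2*M/r - 1 = (2*M - r)/r := by field_simp
    rw [this, ← Real.sqrt_inv, inv_div]

-- integrability of the canonical f0
lemma schw_f0_int {M : ℝ} (hM : 0 < M) :
    IntervalIntegrable (fun r => Real.sqrt (r / (2*M - r))) volume 0 (2*M) := by
  have hg : IntervalIntegrable (fun r => Real.sqrt (2*M) * (2*M - r) ^ (-(1/2) : ℝ))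
      volume 0 (2*M) := by
    have := (intervalIntegral.intervalIntegrable_rpow' (a := 0) (b := 2*M)
      (r := (-(1/2) : ℝ)) (by norm_num)).comp_sub_left (2*M)
    simpa using (this.const_mul (Real.sqrt (2*M))).symm
  refine hg.mono_fun ?_ ?_
  · apply Measurable.aestronglyMeasurable
    fun_prop
  · rw [Filter.EventuallyLE, ae_restrict_iff' measurableSet_uIoc]
    refine Filter.Eventually.of_forall fun x hx => ?_
    rw [uIoc_of_le (by positivity)] at hx
    have hx0 : 0 < x := hx.1
    have hx2 : x ≤ 2*M := hx.2
    rcases eq_or_lt_of_le hx2 with h2 | h2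
    · simp [h2, Real.zero_rpow, Real.sqrt_eq_zero_of_nonpos, le_refl,
        Real.rpow_natCast]
    · have h5 : (0:ℝ) < 2*M - x := by linarith
      have : (2*M - x) ^ (-(1/2) : ℝ) = (Real.sqrt (2*M - x))⁻¹ := by
        rw [Real.rpow_neg h5.le, Real.sqrt_eq_rpow]
      rw [Real.norm_eq_abs, Real.norm_eq_abs, abs_of_nonneg (Real.sqrt_nonneg _),
        this, abs_of_nonneg (by positivity)]
      rw [Real.sqrt_div hx0.le, div_eq_mul_inv]
      have hle : Real.sqrt x ≤ Real.sqrt (2*M) := Real.sqrt_le_sqrt (by linarith)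
      exact mul_le_mul_of_nonneg_right hle (by positivity)

lemma schw_F_deriv {M : ℝ} (hM : 0 < M) {x : ℝ} (hx : x ∈ Ioo (0:ℝ) (2*M)) :
    HasDerivAt (fun r => 2*M * Real.arcsin (Real.sqrt (r/(2*M))) - Real.sqrt (r*(2*M - r)))
      (Real.sqrt (x / (2*M - x))) x := by
  obtain ⟨hx0, hx2⟩ := hx
  have h5 : (0:ℝ) < 2*M - x := by linarith
  have ht0 : (0:ℝ) < x/(2*M) := by positivity
  have ht1 : x/(2*M) < 1 := by rw [div_lt_one (by positivity)]; linarith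
  have hinner : HasDerivAt (fun r : ℝ => r/(2*M)) (1/(2*M)) x := by
    simpa using (hasDerivAt_id x).div_const (2*M)
  have hcomp1 : HasDerivAt (fun r : ℝ => Real.sqrt (r/(2*M)))
      (1/(2*Real.sqrt (x/(2*M))) * (1/(2*M))) x :=
    (Real.hasDerivAt_sqrt (ne_of_gt ht0)).comp x hinner
  have hs2 : Real.sqrt (x/(2*M)) ≠ 1 := by
    rw [show (1:ℝ) = Real.sqrt 1 by simp]
    exact ne_of_lt (Real.sqrt_lt_sqrt ht0.le ht1)
  have hs1 : Real.sqrt (x/(2*M)) ≠ -1 := by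
    intro hc; have := Real.sqrt_nonneg (x/(2*M)); linarith [hc ▸ this]
  have harcsin : HasDerivAt (fun r : ℝ => Real.arcsin (Real.sqrt (r/(2*M))))
      (1/Real.sqrt (1 - Real.sqrt (x/(2*M)) ^ 2) *
        (1/(2*Real.sqrt (x/(2*M))) * (1/(2*M)))) x :=
    by have h1 := Real.hasDerivAt_arcsin hs1 hs2; exact h1.comp x hcomp1
  have hterm1 := harcsin.const_mul (2*M)
  have hu : HasDerivAt (fun r : ℝ => r*(2*M - r)) (2*M - 2*x) x := by
    have := (hasDerivAt_id x).mul ((hasDerivAt_const x (2*M)).sub (hasDerivAt_id x))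
    exact this.congr_deriv (by simp; ring)
  have hterm2 : HasDerivAt (fun r : ℝ => Real.sqrt (r*(2*M - r)))
      (1/(2*Real.sqrt (x*(2*M - x))) * (2*M - 2*x)) x :=
    (Real.hasDerivAt_sqrt (ne_of_gt (by positivity : (0:ℝ) < x*(2*M - x)))).comp x hu
  have total := hterm1.sub hterm2
  refine total.congr_deriv (Eq.symm ?_)
  have hb2M : (1:ℝ) - x/(2*M) = (2*M - x)/(2*M) := by field_simp
  rw [Real.sq_sqrt ht0.le, hb2M, Real.sqrt_div h5.le, Real.sqrt_div hx0.le,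
    Real.sqrt_mul hx0.le, Real.sqrt_div hx0.le]
  have ha : Real.sqrt x ^ 2 = x := Real.sq_sqrt hx0.le
  have hb : Real.sqrt (2*M - x) ^ 2 = 2*M - x := Real.sq_sqrt h5.le
  have hc : Real.sqrt (2*M) ^ 2 = 2*M := Real.sq_sqrt (by positivity)
  set a := Real.sqrt x with hadef
  set b := Real.sqrt (2*M - x) with hbdef
  set c := Real.sqrt (2*M) with hcdef
  have ha0 : 0 < a := Real.sqrt_pos.mpr hx0
  have hb0 : 0 < b := Real.sqrt_pos.mpr h5
  have hc0 : 0 < c := Real.sqrt_pos.mpr (by positivity)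
  rw [← hc, ← ha]
  field_simp
  ring

lemma schw_f0_integral {M : ℝ} (hM : 0 < M) :
    ∫ r in (0:ℝ)..(2*M), Real.sqrt (r / (2*M - r)) = M * Real.pi := by
  have hcont : ContinuousOn
      (fun r => 2*M * Real.arcsin (Real.sqrt (r/(2*M))) - Real.sqrt (r*(2*M - r)))
      (Icc (0:ℝ) (2*M)) := by
    apply Continuous.continuousOn
    exact ((continuous_const.mul (Real.continuous_arcsin.comp
      (Real.continuous_sqrt.comp (continuous_id.div_const _)))).sub
      (Real.continuous_sqrt.comp (continuous_id.mul
        (continuous_const.sub continuous_id))))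
  rw [intervalIntegral.integral_eq_sub_of_hasDeriv_right_of_le (by positivity)
    hcont (fun x hx => (schw_F_deriv hM hx).hasDerivWithinAt) (schw_f0_int hM)]
  have : (2*M)/(2*M) = (1:ℝ) := div_self (by positivity)
  rw [this]
  simp [Real.arcsin_one]
  ring

/-- For any `(e, L) ≠ (0, 0)`, the proper time of infall
`τ(e,L) = ∫₀^{2M} [e² + (1 + L²/r²)(2M/r - 1)]^{-1/2} dr` is strictly less than
`τ(0,0) = M π`. -/
theorem schwarzschild_geodesic_time_lt_max (M : ℝ) (hM : 0 < M) (e L : ℝ)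
    (h : (e, L) ≠ (0, 0)) :
    (∫ r in (0 : ℝ)..(2 * M),
        (Real.sqrt (e ^ 2 + (1 + L ^ 2 / r ^ 2) * (2 * M / r - 1)))⁻¹)
      < M * Real.pi := by
  set f : ℝ → ℝ :=
    fun r => (Real.sqrt (e ^ 2 + (1 + L ^ 2 / r ^ 2) * (2 * M / r - 1)))⁻¹ with hf
  set g : ℝ → ℝ := fun r => Real.sqrt (r / (2*M - r)) with hg
  have hel : e ≠ 0 ∨ L ≠ 0 := by
    by_contra hc; push_neg at hc; exact h (by simp [hc.1, hc.2])
  have key : ∀ x ∈ Ioo (0:ℝ) (2*M), f x < g x := by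
    intro x hx
    obtain ⟨hx0, hx2⟩ := hx
    have hA : (0:ℝ) < 2*M/x - 1 := by
      rw [sub_pos]; exact (one_lt_div hx0).mpr hx2
    have hB : 2*M/x - 1 < e ^ 2 + (1 + L ^ 2 / x ^ 2) * (2*M/x - 1) := by
      have h1 : (0:ℝ) ≤ L ^ 2 / x ^ 2 * (2*M/x - 1) := by positivity
      rcases hel with he | hL
      · nlinarith [pow_pos (abs_pos.mpr he) 2, sq_abs e]
      · have : (0:ℝ) < L ^ 2 / x ^ 2 * (2*M/x - 1) := by positivity
        nlinarith [sq_nonneg e]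
    have heq : g x = (Real.sqrt (2*M/x - 1))⁻¹ :=
      (schw_f0_eq hM ⟨hx0.le, hx2.le⟩).symm
    rw [heq, hf]
    exact inv_strictAnti₀ (Real.sqrt_pos.mpr hA) (Real.sqrt_lt_sqrt hA.le hB)
  have hgint : IntervalIntegrable g volume 0 (2*M) := schw_f0_int hM
  have hfmeas : Measurable f := by
    apply Measurable.inv
    apply Real.continuous_sqrt.measurable.comp
    fun_prop
  have hfint : IntervalIntegrable f volume 0 (2*M) := by
    refine hgint.mono_fun hfmeas.aestronglyMeasurable ?_
    rw [Filter.EventuallyLE, uIoc_of_le (by positivity : (0:ℝ) ≤ 2*M)]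
    refine ae_restrict_of_ae_eq_of_ae_restrict Ioo_ae_eq_Ioc ?_
    rw [ae_restrict_iff' measurableSet_Ioo]
    refine Filter.Eventually.of_forall fun x hx => ?_
    rw [Real.norm_eq_abs, Real.norm_eq_abs, abs_of_nonneg (by positivity),
      abs_of_nonneg (Real.sqrt_nonneg _)]
    exact (key x hx).le
  have hpos : 0 < ∫ x in (0:ℝ)..(2*M), (g x - f x) := by
    apply intervalIntegral.intervalIntegral_pos_of_pos_on (hgint.sub hfint)
      (fun x hx => sub_pos.mpr (key x hx)) (by positivity)
  rw [intervalIntegral.integral_sub hgint hfint, schw_f0_integral hM] at hpos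
  linarith
end

section
/- The solution L(r) of the ODE dL/dr = -α r / √(2M/r - 1) with L(2M) = L₀, on (0, 2M), is L(r) = L₀ + α( (1/2) r (3M + r) √(2M/r - 1) + 3M² arctan √(2M/r - 1) ). -/
/-- The solution of `dL/dr = -αr/√(2M/r - 1)` on `(0, 2M)` with `L(2M) = L₀` is
`L(r) = L₀ + α((1/2) r (3M + r) √(2M/r - 1) + 3M² arctan √(2M/r - 1))`. -/
theorem angular_momentum_solution (M α L₀ : ℝ) (hM : 0 < M) (L : ℝ → ℝ)
    (hderiv : ∀ r ∈ Set.Ioo (0 : ℝ) (2 * M),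
      HasDerivAt L (-α * r / Real.sqrt (2 * M / r - 1)) r)
    (hcont : ContinuousOn L (Set.Ioc (0 : ℝ) (2 * M)))
    (hinit : L (2 * M) = L₀) :
    ∀ r ∈ Set.Ioo (0 : ℝ) (2 * M),
      L r = L₀ + α * ((1 / 2) * r * (3 * M + r) * Real.sqrt (2 * M / r - 1)
        + 3 * M ^ 2 * Real.arctan (Real.sqrt (2 * M / r - 1))) := by
  set F : ℝ → ℝ := fun x => L₀ + α * ((1 / 2) * x * (3 * M + x) * Real.sqrt (2 * M / x - 1)
      + 3 * M ^ 2 * Real.arctan (Real.sqrt (2 * M / x - 1))) with hF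
  have hFderiv : ∀ x ∈ Set.Ioo (0 : ℝ) (2 * M),
      HasDerivAt F (-α * x / Real.sqrt (2 * M / x - 1)) x := by
    intro x hx
    have hx0 : 0 < x := hx.1
    have hxM : x < 2 * M := hx.2
    have hu_pos : 0 < 2 * M / x - 1 := by
      rw [sub_pos, lt_div_iff₀ hx0]; linarith
    have hspos : 0 < Real.sqrt (2 * M / x - 1) := Real.sqrt_pos.mpr hu_pos
    have hs2 : Real.sqrt (2 * M / x - 1) ^ 2 = 2 * M / x - 1 := Real.sq_sqrt hu_pos.le
    have hu : HasDerivAt (fun y : ℝ => 2 * M / y - 1) (-(2 * M) / x ^ 2) x := by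
      have h1 := ((hasDerivAt_inv hx0.ne').const_mul (2 * M)).sub_const 1
      convert h1 using 1
      · rfl
      · rfl
      · rfl
      ring
    have hsq : HasDerivAt (fun y : ℝ => Real.sqrt (2 * M / y - 1))
        ((-(2 * M) / x ^ 2) / (2 * Real.sqrt (2 * M / x - 1))) x := hu.sqrt hu_pos.ne'
    have hP : HasDerivAt (fun y : ℝ => (1 / 2) * y * (3 * M + y))
        ((1 / 2 * 1) * (3 * M + x) + (1 / 2 * x) * (0 + 1)) x :=
      ((hasDerivAt_id x).const_mul (1 / 2)).mul ((hasDerivAt_const x (3 * M)).add (hasDerivAt_id x))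
    have hG := (hP.mul hsq).add ((hsq.arctan).const_mul (3 * M ^ 2))
    have hFd := (hG.const_mul α).const_add L₀
    convert hFd using 1
    · rfl
    · rfl
    · rfl
    set s := Real.sqrt (2 * M / x - 1) with hsdef
    clear_value s
    have h1s : 1 + s ^ 2 = 2 * M / x := by rw [hs2]; ring
    rw [h1s]
    have hsx : s ^ 2 * x = 2 * M - x := by
      field_simp at hs2
      linarith [hs2]
    field_simp
    linear_combination (-α * (3 * M + 2 * x)) * hsx
  intro r hr
  have hr0 : 0 < r := hr.1
  have hrM : r < 2 * M := hr.2
  have hsub : Set.Icc r (2 * M) ⊆ {x : ℝ | x ≠ 0} := fun x hx =>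
    (lt_of_lt_of_le hr0 hx.1).ne'
  have hg : ContinuousOn (fun x : ℝ => Real.sqrt (2 * M / x - 1)) (Set.Icc r (2 * M)) := by
    apply Real.continuous_sqrt.comp_continuousOn
    exact ((continuousOn_const.div continuousOn_id (fun x hx => hsub hx)).sub continuousOn_const)
  have hFcont : ContinuousOn F (Set.Icc r (2 * M)) := by
    apply ContinuousOn.add continuousOn_const
    apply ContinuousOn.mul continuousOn_const
    apply ContinuousOn.add
    · exact ((continuousOn_const.mul continuousOn_id).mul
        (continuousOn_const.add continuousOn_id)).mul hg
    · exact continuousOn_const.mul (Real.continuous_arctan.comp_continuousOn hg)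
  have hLcont : ContinuousOn L (Set.Icc r (2 * M)) :=
    hcont.mono (fun x hx => ⟨lt_of_lt_of_le hr0 hx.1, hx.2⟩)
  have key := constant_of_has_deriv_right_zero (f := fun x => L x - F x)
    (a := r) (b := 2 * M) (hLcont.sub hFcont) (fun y hy => by
      have hy' : y ∈ Set.Ioo (0 : ℝ) (2 * M) := ⟨lt_of_lt_of_le hr0 hy.1, hy.2⟩
      simpa [Pi.sub_def] using ((hderiv y hy').sub (hFderiv y hy')).hasDerivWithinAt)
  have h2M : L (2 * M) - F (2 * M) = L r - F r := key (2 * M) ⟨hrM.le, le_refl _⟩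
  have hF2M : F (2 * M) = L₀ := by
    have hz : 2 * M / (2 * M) - 1 = 0 := by
      field_simp
      norm_num
    simp [hF, hz]
  rw [hinit, hF2M, sub_self] at h2M
  have hLF : L r = F r := by linarith
  rw [hLF, hF]
end

section
/- With the normalization of the previous context, the Lorentz factor between an arbitrary timelike unit vector u (with parameters e, L at radius r) and the optimal observer's 4-velocity u_opt = (-√(2M/r - 1), 0, 0) is γ = g(u, u_opt) = √(L²/r² + 1 + e²(2M/r - 1)^{-1}), and γ ≥ 1 with equality iff e = 0 and L = 0. -/
set_option maxHeartbeats 1000000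


/-- The Lorentz factor between a unit timelike vector `u` (future-directed,
`uʳ < 0`) with parameters `e, L` at radius `r` and the optimal observer
`u_opt = (-√(2M/r - 1), 0, 0)` is
`γ = √(L²/r² + 1 + e²(2M/r - 1)⁻¹)`, with `γ ≥ 1` and equality iff
`e = 0 ∧ L = 0`. Here `γ` is the (sign-corrected) metric inner product of `u`
and `u_opt` in the metric `ds² = -(2M/r-1)⁻¹dr² + (2M/r-1)dt² + r²dφ²`. -/
theorem lorentz_factor_vs_optimal_observer (M r ur ut uφ e L : ℝ)
    (hM : 0 < M) (hr : 0 < r) (hr2 : r < 2 * M)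
    (hnorm : -(2 * M / r - 1)⁻¹ * ur ^ 2 + (2 * M / r - 1) * ut ^ 2
      + r ^ 2 * uφ ^ 2 = -1)
    (hfuture : ur < 0)
    (he : e = (2 * M / r - 1) * ut) (hL : L = r ^ 2 * uφ) :
    -(-(2 * M / r - 1)⁻¹ * ur * (-Real.sqrt (2 * M / r - 1)))
        = Real.sqrt (L ^ 2 / r ^ 2 + 1 + e ^ 2 * (2 * M / r - 1)⁻¹) ∧
      1 ≤ Real.sqrt (L ^ 2 / r ^ 2 + 1 + e ^ 2 * (2 * M / r - 1)⁻¹) ∧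
      (Real.sqrt (L ^ 2 / r ^ 2 + 1 + e ^ 2 * (2 * M / r - 1)⁻¹) = 1
        ↔ e = 0 ∧ L = 0) := by
  have hf : 0 < 2 * M / r - 1 := by
    rw [sub_pos, lt_div_iff₀ hr]; linarith
  set f : ℝ := 2 * M / r - 1 with hfdef
  have hfne : f ≠ 0 := ne_of_gt hf
  have hrne : r ≠ 0 := ne_of_gt hr
  have hE : L ^ 2 / r ^ 2 + 1 + e ^ 2 * f⁻¹
      = r ^ 2 * uφ ^ 2 + 1 + f * ut ^ 2 := by
    subst he hL; field_simp
  have hE2 : r ^ 2 * uφ ^ 2 + 1 + f * ut ^ 2 = f⁻¹ * ur ^ 2 := by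
    linarith [hnorm]
  set s : ℝ := Real.sqrt f with hsdef
  have hs : 0 < s := Real.sqrt_pos.mpr hf
  have hs2 : s * s = f := Real.mul_self_sqrt hf.le
  refine ⟨?_, ?_, ?_⟩
  · rw [hE, hE2, Real.sqrt_mul (by positivity) _, Real.sqrt_inv,
      Real.sqrt_sq_eq_abs, abs_of_neg hfuture, ← hsdef]
    have key : f⁻¹ * s = s⁻¹ := by
      rw [← hs2]; field_simp
    rw [show -(-f⁻¹ * ur * (-s)) = f⁻¹ * s * (-ur) by ring, key]
  · rw [hE]
    have h1 : (1:ℝ) ≤ r ^ 2 * uφ ^ 2 + 1 + f * ut ^ 2 := by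
      nlinarith [mul_nonneg hf.le (sq_nonneg ut), mul_nonneg (sq_nonneg r) (sq_nonneg uφ)]
    calc (1:ℝ) = Real.sqrt 1 := Real.sqrt_one.symm
      _ ≤ _ := Real.sqrt_le_sqrt h1
  · constructor
    · intro h
      have hEnn : (0:ℝ) ≤ L ^ 2 / r ^ 2 + 1 + e ^ 2 * f⁻¹ := by
        rw [hE]
        nlinarith [mul_nonneg hf.le (sq_nonneg ut), mul_nonneg (sq_nonneg r) (sq_nonneg uφ)]
      have hE1 : L ^ 2 / r ^ 2 + 1 + e ^ 2 * f⁻¹ = 1 := by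
        have := Real.sq_sqrt hEnn
        rw [h] at this; nlinarith [this]
      rw [hE] at hE1
      have h2 : f * ut ^ 2 = 0 := by
        nlinarith [mul_nonneg hf.le (sq_nonneg ut), mul_nonneg (sq_nonneg r) (sq_nonneg uφ)]
      have h3 : r ^ 2 * uφ ^ 2 = 0 := by
        nlinarith [mul_nonneg hf.le (sq_nonneg ut), mul_nonneg (sq_nonneg r) (sq_nonneg uφ)]
      have hut : ut = 0 := by
        have := (mul_eq_zero.mp h2).resolve_left hfne
        exact pow_eq_zero_iff (n := 2) (by norm_num) |>.mp this
      have huφ : uφ = 0 := by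
        have := (mul_eq_zero.mp h3).resolve_left (pow_ne_zero 2 hrne)
        exact pow_eq_zero_iff (n := 2) (by norm_num) |>.mp this
      exact ⟨by rw [he, hut, mul_zero], by rw [hL, huφ, mul_zero]⟩
    · rintro ⟨he0, hL0⟩
      rw [he0, hL0]
      norm_num
end

section
/- Let γ: I → ℝ be differentiable with γ(s) ≥ 1 for all s, and suppose along an accelerated worldline dγ/ds = γ³ (v · a) where v, a: I → ℝⁿ with |v| = √(1 - γ^{-2}) and |a| ≤ α fixed. Then dγ/ds ≥ -γ³ |v| α, with equality iff a = -α v/|v| (when v ≠ 0). Consequently, among all controls with |a| ≤ α, the choice a = -α v/|v| minimizes γ(s) pointwise and hence maximizes ∫ γ^{-1} ds. -/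
open scoped RealInnerProductSpace

/-- Core optimal-control step: if along an accelerated worldline
`dγ/ds = γ³ (v · a)` with `|v| = √(1 - γ⁻²)`, `|a| ≤ α` and `γ ≥ 1`, then
`dγ/ds ≥ -γ³ |v| α`, with equality (when `v ≠ 0`) iff `a = -α v/|v|`;
the retrograde full-thrust control therefore minimizes `dγ/ds` pointwise. -/
theorem retrograde_thrust_minimizes_gamma_derivative (n : ℕ)
    (I : Set ℝ) (γ γ' : ℝ → ℝ) (v a : ℝ → EuclideanSpace ℝ (Fin n)) (α : ℝ)
    (hα : 0 ≤ α)
    (hγderiv : ∀ s ∈ I, HasDerivAt γ (γ' s) s)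
    (hode : ∀ s ∈ I, γ' s = (γ s) ^ 3 * ⟪v s, a s⟫)
    (hγ : ∀ s ∈ I, 1 ≤ γ s)
    (hv : ∀ s ∈ I, ‖v s‖ = Real.sqrt (1 - ((γ s) ^ 2)⁻¹))
    (ha : ∀ s ∈ I, ‖a s‖ ≤ α) :
    ∀ s ∈ I,
      -((γ s) ^ 3 * ‖v s‖ * α) ≤ γ' s ∧
      (v s ≠ 0 →
        (γ' s = -((γ s) ^ 3 * ‖v s‖ * α) ↔ a s = -(α / ‖v s‖) • v s)) := by
  intro s hs
  have hg : 1 ≤ γ s := hγ s hs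
  have hg3 : 0 < (γ s) ^ 3 := by positivity
  have hode' := hode s hs
  have hCS : -(‖v s‖ * ‖a s‖) ≤ ⟪v s, a s⟫ := by
    have := abs_real_inner_le_norm (v s) (a s)
    have := neg_abs_le (⟪v s, a s⟫)
    linarith
  have hvnn : (0:ℝ) ≤ ‖v s‖ := norm_nonneg _
  have hann : (0:ℝ) ≤ ‖a s‖ := norm_nonneg _
  have haα := ha s hs
  have hlow : -((γ s) ^ 3 * ‖v s‖ * α) ≤ γ' s := by
    rw [hode']
    have h1 : -(‖v s‖ * α) ≤ ⟪v s, a s⟫ := by nlinarith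
    nlinarith
  refine ⟨hlow, fun hvne => ?_⟩
  have hvpos : 0 < ‖v s‖ := norm_pos_iff.mpr hvne
  constructor
  · intro heq
    have hip : ⟪v s, a s⟫ = -(‖v s‖ * α) := by
      rw [hode'] at heq
      have := hg3.ne'
      field_simp at heq ⊢
      nlinarith
    -- forces ‖a s‖ = α
    have haeq : ‖a s‖ = α := by nlinarith
    -- Cauchy-Schwarz equality: ⟪v, -a⟫ = ‖v‖‖-a‖
    have hce : ⟪v s, -(a s)⟫ = ‖v s‖ * ‖-(a s)‖ := by
      rw [inner_neg_right, norm_neg, haeq, hip]; ring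
    have := (inner_eq_norm_mul_iff_real (x := v s) (y := -(a s))).mp hce
    -- ‖-(a s)‖ • v s = ‖v s‖ • (-(a s))
    rw [norm_neg, haeq] at this
    have : a s = -(α / ‖v s‖) • v s := by
      have h2 : ‖v s‖ • a s = -(α • v s) := by
        rw [smul_neg] at this
        rw [eq_comm, neg_eq_iff_eq_neg] at this; exact this
      have h3 : a s = (‖v s‖)⁻¹ • (‖v s‖ • a s) := by
        rw [smul_smul, inv_mul_cancel₀ hvpos.ne', one_smul]
      rw [h2, smul_neg, smul_smul] at h3
      rw [h3, neg_smul]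
      congr 1
      field_simp
    exact this
  · intro haeq
    rw [hode', haeq]
    rw [inner_smul_right, real_inner_self_eq_norm_sq]
    have : -(α / ‖v s‖) * ‖v s‖ ^ 2 = -(‖v s‖ * α) := by
      field_simp
    rw [this]; ring
end

section
/- For fixed M > 0, e₀ ≥ 0, L₀ = 0, the survival time τ(α) = ∫₀^{2M} [(e₀ - α(2M - r))² + (2M/r - 1)]^{-1/2} dr (with engine shut off when e reaches 0, i.e. e replaced by max(e₀ - α(2M-r), 0)) is non-decreasing in α ≥ 0 and bounded above by Mπ, with τ(α) → Mπ as α → ∞. -/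
open MeasureTheory Set Filter Real

namespace SurvivalAux

lemma ae_restrict_of_Ioo {a b : ℝ} {s : Set ℝ} {P : ℝ → Prop}
    (hs : s =ᵐ[volume] Set.Ioo a b) (h : ∀ x ∈ Set.Ioo a b, P x) :
    ∀ᵐ x ∂(volume.restrict s), P x := by
  rw [Measure.restrict_congr_set hs]
  filter_upwards [ae_restrict_mem measurableSet_Ioo] with x hx using h x hx

lemma B_int {M : ℝ} :
    IntervalIntegrable (fun r : ℝ => Real.sqrt (2*M) * (2*M - r) ^ (-(1/2):ℝ))
      volume 0 (2*M) := by
  have h : IntervalIntegrable (fun x : ℝ => x ^ (-(1/2):ℝ)) volume 0 (2*M) :=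
    intervalIntegral.intervalIntegrable_rpow' (by norm_num)
  have h2 := (h.comp_sub_left (2*M)).symm
  simp only [sub_zero, sub_self] at h2
  exact h2.const_mul _

lemma meas_f (M e₀ α : ℝ) :
    Measurable (fun r : ℝ =>
      (Real.sqrt ((max (e₀ - α * (2 * M - r)) 0) ^ 2 + (2 * M / r - 1)))⁻¹) := by
  apply Measurable.inv
  apply Real.continuous_sqrt.measurable.comp
  apply Measurable.add
  · exact ((measurable_const.sub ((measurable_const.sub measurable_id).const_mul α)).max
      measurable_const).pow measurable_const
  · exact (measurable_const.div measurable_id).sub measurable_const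

lemma meas_g (M : ℝ) :
    Measurable (fun r : ℝ => (Real.sqrt (2 * M / r - 1))⁻¹) :=
  (Real.continuous_sqrt.measurable.comp
    ((measurable_const.div measurable_id).sub measurable_const)).inv

lemma inv_sqrt_le {x y : ℝ} (hx : 0 < x) (hxy : x ≤ y) :
    (Real.sqrt y)⁻¹ ≤ (Real.sqrt x)⁻¹ := by
  have h1 : 0 < Real.sqrt x := Real.sqrt_pos.2 hx
  have h2 : Real.sqrt x ≤ Real.sqrt y := Real.sqrt_le_sqrt hxy
  exact inv_anti₀ h1 h2

lemma g_eq {M r : ℝ} (hr : r ∈ Set.Ioo 0 (2*M)) :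
    (Real.sqrt (2*M/r - 1))⁻¹ = Real.sqrt r / Real.sqrt (2*M - r) := by
  obtain ⟨hr0, hr2⟩ := hr
  rw [show 2*M/r - 1 = (2*M - r)/r by field_simp, Real.sqrt_div (by linarith), inv_div]

lemma g_le_B {M r : ℝ} (hM : 0 < M) (hr : r ∈ Set.Ioo 0 (2*M)) :
    ‖(Real.sqrt (2*M/r - 1))⁻¹‖ ≤ Real.sqrt (2*M) * (2*M - r) ^ (-(1/2):ℝ) := by
  obtain ⟨hr0, hr2⟩ := hr
  have hsub : (0:ℝ) < 2*M - r := by linarith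
  rw [g_eq ⟨hr0, hr2⟩, Real.norm_eq_abs, abs_of_nonneg (by positivity),
    Real.rpow_neg hsub.le, ← Real.sqrt_eq_rpow]
  rw [div_eq_mul_inv]
  gcongr


lemma f_le_g {M e₀ α r : ℝ} (hr : r ∈ Set.Ioo 0 (2*M)) :
    (Real.sqrt ((max (e₀ - α * (2 * M - r)) 0) ^ 2 + (2 * M / r - 1)))⁻¹
      ≤ (Real.sqrt (2*M/r - 1))⁻¹ := by
  obtain ⟨hr0, hr2⟩ := hr
  have hpos : (0:ℝ) < 2*M/r - 1 := by
    rw [lt_sub_iff_add_lt, zero_add, lt_div_iff₀ hr0]; linarith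
  exact inv_sqrt_le hpos (by nlinarith [sq_nonneg (max (e₀ - α * (2 * M - r)) 0)])

lemma f_nonneg (M e₀ α r : ℝ) :
    0 ≤ (Real.sqrt ((max (e₀ - α * (2 * M - r)) 0) ^ 2 + (2 * M / r - 1)))⁻¹ := by
  positivity

lemma f_mono {M e₀ α₁ α₂ r : ℝ} (h0 : 0 ≤ α₁) (h12 : α₁ ≤ α₂)
    (hr : r ∈ Set.Ioo 0 (2*M)) :
    (Real.sqrt ((max (e₀ - α₁ * (2 * M - r)) 0) ^ 2 + (2 * M / r - 1)))⁻¹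
      ≤ (Real.sqrt ((max (e₀ - α₂ * (2 * M - r)) 0) ^ 2 + (2 * M / r - 1)))⁻¹ := by
  obtain ⟨hr0, hr2⟩ := hr
  have hpos : (0:ℝ) < 2*M/r - 1 := by
    rw [lt_sub_iff_add_lt, zero_add, lt_div_iff₀ hr0]; linarith
  have hmax : max (e₀ - α₂ * (2 * M - r)) 0 ≤ max (e₀ - α₁ * (2 * M - r)) 0 := by
    apply max_le_max _ le_rfl
    nlinarith
  have hmax0 : (0:ℝ) ≤ max (e₀ - α₂ * (2 * M - r)) 0 := le_max_right _ _
  apply inv_sqrt_le (by nlinarith [sq_nonneg (max (e₀ - α₂ * (2 * M - r)) 0)])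
  have := pow_le_pow_left₀ hmax0 hmax 2
  linarith

lemma uIoc_eq {M : ℝ} (hM : 0 < M) : Set.uIoc (0:ℝ) (2*M) = Set.Ioc 0 (2*M) :=
  Set.uIoc_of_le (by linarith)

lemma g_int {M : ℝ} (hM : 0 < M) :
    IntervalIntegrable (fun r : ℝ => (Real.sqrt (2*M/r - 1))⁻¹) volume 0 (2*M) := by
  apply IntervalIntegrable.mono_fun' (B_int (M := M))
  · exact (meas_g M).aestronglyMeasurable
  · rw [uIoc_eq hM]
    exact ae_restrict_of_Ioo Ioo_ae_eq_Ioc.symm (fun r hr => g_le_B hM hr)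

lemma f_int {M e₀ : ℝ} (hM : 0 < M) (α : ℝ) :
    IntervalIntegrable (fun r : ℝ =>
      (Real.sqrt ((max (e₀ - α * (2 * M - r)) 0) ^ 2 + (2 * M / r - 1)))⁻¹)
      volume 0 (2*M) := by
  apply IntervalIntegrable.mono_fun' (B_int (M := M))
  · exact (meas_f M e₀ α).aestronglyMeasurable
  · rw [uIoc_eq hM]
    apply ae_restrict_of_Ioo Ioo_ae_eq_Ioc.symm
    intro r hr
    dsimp only
    rw [Real.norm_eq_abs, abs_of_nonneg (f_nonneg M e₀ α r)]
    calc _ ≤ (Real.sqrt (2*M/r - 1))⁻¹ := f_le_g hr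
    _ ≤ _ := by
        have := g_le_B hM hr
        rwa [Real.norm_eq_abs, abs_of_nonneg (by positivity)] at this

lemma g_deriv {M r : ℝ} (hM : 0 < M) (hr : r ∈ Set.Ioo 0 (2*M)) :
    HasDerivAt (fun r : ℝ => 2*M * Real.arcsin (Real.sqrt (r / (2*M))) - Real.sqrt (r * (2*M - r)))
      ((Real.sqrt (2*M/r - 1))⁻¹) r := by
  obtain ⟨hr0, hr2⟩ := hr
  have h2M : (0:ℝ) < 2*M := by linarith
  have hsub : (0:ℝ) < 2*M - r := by linarith
  have hsr : 0 < Real.sqrt r := Real.sqrt_pos.2 hr0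
  have hssub : 0 < Real.sqrt (2*M - r) := Real.sqrt_pos.2 hsub
  have hs2M : 0 < Real.sqrt (2*M) := Real.sqrt_pos.2 h2M
  have h1 : HasDerivAt (fun r : ℝ => r * (2*M - r)) (2*M - 2*r) r := by
    have := (hasDerivAt_id r).mul ((hasDerivAt_const r (2*M)).sub (hasDerivAt_id r))
    exact this.congr_deriv (by simp; ring)
  have hne : r * (2*M - r) ≠ 0 := by positivity
  have h2 : HasDerivAt (fun r : ℝ => Real.sqrt (r * (2*M - r)))
      (1 / (2 * Real.sqrt (r * (2*M - r))) * (2*M - 2*r)) r :=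
    (Real.hasDerivAt_sqrt hne).comp r h1
  have h3 : HasDerivAt (fun r : ℝ => r / (2*M)) (1/(2*M)) r := by
    simpa using (hasDerivAt_id r).div_const (2*M)
  have hdivne : r / (2*M) ≠ 0 := by positivity
  have h4 : HasDerivAt (fun r : ℝ => Real.sqrt (r / (2*M)))
      (1 / (2 * Real.sqrt (r / (2*M))) * (1/(2*M))) r :=
    (Real.hasDerivAt_sqrt hdivne).comp r h3
  have hxlt : Real.sqrt (r / (2*M)) < 1 := by
    rw [show (1:ℝ) = Real.sqrt 1 by simp]
    exact Real.sqrt_lt_sqrt (by positivity) (by rw [div_lt_one h2M]; linarith)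
  have hxgt : (0:ℝ) < Real.sqrt (r / (2*M)) := Real.sqrt_pos.2 (by positivity)
  have h5 : HasDerivAt (fun r : ℝ => Real.arcsin (Real.sqrt (r / (2*M))))
      (1 / Real.sqrt (1 - (Real.sqrt (r / (2*M)))^2) *
        (1 / (2 * Real.sqrt (r / (2*M))) * (1/(2*M)))) r :=
    by have := (Real.hasDerivAt_arcsin (x := Real.sqrt (r / (2*M))) (ne_of_gt (by linarith)) (ne_of_lt hxlt)).comp r h4; exact this
  have h6 := ((h5.const_mul (2*M)).sub h2)
  refine h6.congr_deriv (Eq.symm ?_)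
  have e1 : Real.sqrt (r * (2*M - r)) = Real.sqrt r * Real.sqrt (2*M - r) :=
    Real.sqrt_mul hr0.le _
  have e2 : Real.sqrt (r / (2*M)) = Real.sqrt r / Real.sqrt (2*M) :=
    Real.sqrt_div hr0.le _
  have e3 : (Real.sqrt (r / (2*M)))^2 = r / (2*M) := Real.sq_sqrt (by positivity)
  have e4 : (1 : ℝ) - r/(2*M) = (2*M - r)/(2*M) := by field_simp
  have e5 : Real.sqrt ((2*M - r)/(2*M)) = Real.sqrt (2*M - r) / Real.sqrt (2*M) :=
    Real.sqrt_div hsub.le _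
  have e6 : Real.sqrt (2*M/r - 1) = Real.sqrt (2*M - r) / Real.sqrt r := by
    rw [show 2*M/r - 1 = (2*M - r)/r by field_simp, Real.sqrt_div hsub.le]
  have hsq : Real.sqrt r * Real.sqrt r = r := Real.mul_self_sqrt hr0.le
  have hsq2 : Real.sqrt (2*M) * Real.sqrt (2*M) = 2*M := Real.mul_self_sqrt h2M.le
  have hsq3 : Real.sqrt (2*M - r) * Real.sqrt (2*M - r) = 2*M - r :=
    Real.mul_self_sqrt hsub.le
  rw [e3, e4, e5, e1, e2]
  rw [e6, inv_div]
  generalize Real.sqrt r = a at *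
  generalize Real.sqrt (2*M - r) = b at *
  generalize Real.sqrt (2*M) = c at *
  field_simp
  linear_combination 2 * hsq - hsq2

lemma g_val {M : ℝ} (hM : 0 < M) :
    (∫ r in (0:ℝ)..(2*M), (Real.sqrt (2*M/r - 1))⁻¹) = M * Real.pi := by
  have h2M : (0:ℝ) < 2*M := by linarith
  have hcont : ContinuousOn (fun r : ℝ =>
      2*M * Real.arcsin (Real.sqrt (r / (2*M))) - Real.sqrt (r * (2*M - r)))
      (Set.Icc 0 (2*M)) := by
    apply Continuous.continuousOn
    exact (continuous_const.mul (Real.continuous_arcsin.comp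
      (Real.continuous_sqrt.comp (continuous_id.div_const _)))).sub
      (Real.continuous_sqrt.comp (continuous_id.mul (continuous_const.sub continuous_id)))
  rw [intervalIntegral.integral_eq_sub_of_hasDeriv_right_of_le h2M.le hcont
    (fun x hx => (g_deriv hM hx).hasDerivWithinAt) (g_int hM)]
  rw [div_self h2M.ne', Real.sqrt_one, Real.arcsin_one]
  norm_num [Real.arcsin_zero]
  ring

end SurvivalAux

open SurvivalAux in
/-- For fixed `M > 0`, `e₀ ≥ 0`, `L₀ = 0`, the survival time
`τ(α) = ∫₀^{2M} [(max(e₀ - α(2M - r), 0))² + (2M/r - 1)]^{-1/2} dr`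
(engine shut off when `e` reaches 0) is non-decreasing in `α ≥ 0`, bounded
above by `Mπ`, and tends to `Mπ` as `α → ∞`. -/
theorem survival_time_monotone_in_thrust (M e₀ : ℝ) (hM : 0 < M)
    (he₀ : 0 ≤ e₀) :
    (∀ α₁ α₂ : ℝ, 0 ≤ α₁ → α₁ ≤ α₂ →
      (∫ r in (0 : ℝ)..(2 * M),
          (Real.sqrt ((max (e₀ - α₁ * (2 * M - r)) 0) ^ 2 + (2 * M / r - 1)))⁻¹)
        ≤ ∫ r in (0 : ℝ)..(2 * M),
          (Real.sqrt ((max (e₀ - α₂ * (2 * M - r)) 0) ^ 2 + (2 * M / r - 1)))⁻¹) ∧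
    (∀ α : ℝ, 0 ≤ α →
      (∫ r in (0 : ℝ)..(2 * M),
          (Real.sqrt ((max (e₀ - α * (2 * M - r)) 0) ^ 2 + (2 * M / r - 1)))⁻¹)
        ≤ M * Real.pi) ∧
    Filter.Tendsto (fun α : ℝ =>
        ∫ r in (0 : ℝ)..(2 * M),
          (Real.sqrt ((max (e₀ - α * (2 * M - r)) 0) ^ 2 + (2 * M / r - 1)))⁻¹)
      Filter.atTop (nhds (M * Real.pi)) := by
  have h2M : (0:ℝ) < 2*M := by linarith
  refine ⟨?_, ?_, ?_⟩
  · intro α₁ α₂ h0 h12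
    apply intervalIntegral.integral_mono_ae_restrict h2M.le (f_int hM α₁) (f_int hM α₂)
    exact ae_restrict_of_Ioo Ioo_ae_eq_Icc.symm (fun r hr => f_mono h0 h12 hr)
  · intro α hα
    have hle : (∫ r in (0 : ℝ)..(2 * M),
        (Real.sqrt ((max (e₀ - α * (2 * M - r)) 0) ^ 2 + (2 * M / r - 1)))⁻¹)
        ≤ ∫ r in (0:ℝ)..(2*M), (Real.sqrt (2*M/r - 1))⁻¹ := by
      apply intervalIntegral.integral_mono_ae_restrict h2M.le (f_int hM α) (g_int hM)
      exact ae_restrict_of_Ioo Ioo_ae_eq_Icc.symm (fun r hr => f_le_g hr)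
    calc _ ≤ _ := hle
    _ = M * Real.pi := g_val hM
  · rw [show M * Real.pi = ∫ r in (0:ℝ)..(2*M), (Real.sqrt (2*M/r - 1))⁻¹ from (g_val hM).symm]
    apply intervalIntegral.tendsto_integral_filter_of_dominated_convergence
      (fun r => Real.sqrt (2*M) * (2*M - r) ^ (-(1/2):ℝ))
    · exact Eventually.of_forall (fun α => (meas_f M e₀ α).aestronglyMeasurable)
    · apply Eventually.of_forall
      intro α
      have hne : ∀ᵐ x : ℝ ∂volume, x ≠ 2*M := by
        rw [MeasureTheory.ae_iff]
        apply measure_mono_null _ (measure_singleton (2*M))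
        intro x hx; simpa using hx
      filter_upwards [hne] with x hx hxI
      rw [uIoc_eq hM] at hxI
      have hxIoo : x ∈ Set.Ioo (0:ℝ) (2*M) := ⟨hxI.1, lt_of_le_of_ne hxI.2 hx⟩
      rw [Real.norm_eq_abs, abs_of_nonneg (f_nonneg M e₀ α x)]
      calc _ ≤ (Real.sqrt (2*M/x - 1))⁻¹ := f_le_g hxIoo
      _ ≤ _ := by
          have := g_le_B hM hxIoo
          rwa [Real.norm_eq_abs, abs_of_nonneg (by positivity)] at this
    · exact B_int
    · have hne : ∀ᵐ x : ℝ ∂volume, x ≠ 2*M := by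
        rw [MeasureTheory.ae_iff]
        apply measure_mono_null _ (measure_singleton (2*M))
        intro x hx; simpa using hx
      filter_upwards [hne] with x hx hxI
      rw [uIoc_eq hM] at hxI
      have hxIoo : x ∈ Set.Ioo (0:ℝ) (2*M) := ⟨hxI.1, lt_of_le_of_ne hxI.2 hx⟩
      apply Tendsto.congr' _ tendsto_const_nhds
      have hsub : (0:ℝ) < 2*M - x := by linarith [hxIoo.2]
      filter_upwards [Filter.eventually_ge_atTop (e₀ / (2*M - x))] with α hα
      have : e₀ - α * (2*M - x) ≤ 0 := by
        rw [div_le_iff₀ hsub] at hα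
        linarith
      rw [max_eq_right this]
      norm_num
end
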